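/- Let g_λ(n) denote the number of vacillating tableaux of shape λ and length 2n. Then for all m, n ≥ 0, the sum over all integer partitions λ of g_λ(n)·g_λ(m) equals the Bell number B(m+n). -/

import Mathlib

def AddOne (μ ν : YoungDiagram) : Prop := μ ≤ ν ∧ ν.card = μ.card + 1

def IsVacTab (n : ℕ) (lam : YoungDiagram) (V : ℕ → YoungDiagram) : Prop :=
  V 0 = ⊥ ∧ V (2 * n) = lam ∧ (∀ k, 2 * n ≤ k → V k = lam) ∧
  (∀ i < n, V (2 * i + 1) = V (2 * i) ∨ AddOne (V (2 * i + 1)) (V (2 * i))) ∧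
  (∀ i < n, V (2 * i + 2) = V (2 * i + 1) ∨ AddOne (V (2 * i + 1)) (V (2 * i + 2)))

/-- `g_λ(n)`: the number of vacillating tableaux of shape `λ` and length `2n`. -/
noncomputable def g (lam : YoungDiagram) (n : ℕ) : ℕ :=
  Nat.card {V : ℕ → YoungDiagram // IsVacTab n lam V}

/-!
A vacillating tableau is a walk in Young's lattice whose steps alternately remove a cell or stay
and add a cell or stay. Cutting a closed walk `∅ → ∅` of length `2(n+m)` at time `2n`, and
reversing its second half, gives `∑_λ g_λ(n) g_λ(m) = g_∅(n+m)`.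

To count closed walks, let `U` and `D` be the up and down operators on the free `ℕ`-module
over Young's lattice. Young's lattice is a differential poset, `DU = UD + 1`, so `X = 1 + U`
and `Y = 1 + D` satisfy `YX = 1 + XY`. Now `g_∅(n)` is the `∅`-coefficient of `(XY)ⁿ δ_∅`,
which is unchanged by a leading `X` and a trailing `Y`; hence expanding
`(XY)ⁿ⁺¹ = X (1 + XY)ⁿ Y` gives `g_∅(n+1) = ∑_k C(n,k) g_∅(n-k)`. This is the Bell
recurrence, which set partitions satisfy by sorting them according to the block containing a
fixed element.
-/

open Finset

theorem Nat.card_eq_finsum_card_fiber {A B : Type*} [Finite A] (f : A → B) :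
    Nat.card A = ∑ᶠ b, Nat.card {a // f a = b} := by
  classical
  have := Fintype.ofFinite A
  rw [finsum_eq_sum_of_support_subset _ (s := univ.image f) fun b hb => ?_]
  · rw [Nat.card_eq_fintype_card, ← Finset.card_univ, card_eq_sum_card_image f univ]
    refine sum_congr rfl fun b _ => ?_
    rw [Nat.card_eq_fintype_card, Fintype.card_subtype]
  · obtain ⟨⟨a, rfl⟩⟩ := (Nat.card_ne_zero.1 hb).1
    exact mem_image_of_mem f (mem_univ a)

namespace Finpartition

variable {α : Type*} [DecidableEq α]

lemma sup_erase_parts {u p : Finset α} (P : Finpartition u) (hp : p ∈ P.parts) :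
    (P.parts.erase p).sup id = u \ p := by
  have hdisj : Disjoint p ((P.parts.erase p).sup id) :=
    P.supIndep (erase_subset _ _) hp (notMem_erase _ _)
  calc (P.parts.erase p).sup id = (id p ⊔ (P.parts.erase p).sup id) \ p :=
        (union_sdiff_cancel_left hdisj).symm
    _ = u \ p := by rw [← sup_insert, insert_erase hp, P.sup_parts]

def extendInsert {a : α} {s t : Finset α} (ha : a ∉ s) (ht : t ⊆ s)
    (Q : Finpartition (s \ t)) : Finpartition (insert a s) :=
  Q.extend (b := insert a t) (insert_ne_empty a t)
    (disjoint_insert_right.2 ⟨fun h => ha (mem_sdiff.1 h).1, sdiff_disjoint⟩)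
    (by rw [sup_eq_union, union_insert, sdiff_union_of_subset ht])

lemma part_extendInsert {a : α} {s t : Finset α} (ha : a ∉ s) (ht : t ⊆ s)
    (Q : Finpartition (s \ t)) : (extendInsert ha ht Q).part a = insert a t :=
  part_eq_of_mem _ (mem_insert_self _ _) (mem_insert_self a t)

lemma extendInsert_parts {a : α} {s t : Finset α} (ha : a ∉ s) (ht : t ⊆ s)
    (Q : Finpartition (s \ t)) : (extendInsert ha ht Q).parts = insert (insert a t) Q.parts :=
  rfl

def insertEquiv {a : α} {s t : Finset α} (ha : a ∉ s) (ht : t ⊆ s) :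
    {P : Finpartition (insert a s) // (P.part a).erase a = t} ≃ Finpartition (s \ t) where
  toFun P := P.1.ofSubset (erase_subset (P.1.part a) _) <| by
    obtain ⟨P, rfl⟩ := P
    have hmem : a ∈ P.part a := P.mem_part_self.2 (mem_insert_self a s)
    rw [sup_erase_parts _ (P.part_mem.2 (mem_insert_self a s))]
    ext x
    by_cases hx : x = a <;> simp_all
  invFun Q := ⟨extendInsert ha ht Q, by
    rw [part_extendInsert, erase_insert fun h => ha (ht h)]⟩
  left_inv P := by
    obtain ⟨P, rfl⟩ := P
    refine Subtype.ext (Finpartition.ext ?_)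
    rw [extendInsert_parts, ofSubset_parts,
      insert_erase (P.mem_part_self.2 (mem_insert_self a s)),
      insert_erase (P.part_mem.2 (mem_insert_self a s))]
  right_inv Q := by
    refine Finpartition.ext ?_
    rw [ofSubset_parts, part_extendInsert, extendInsert_parts, erase_insert fun h => ?_]
    exact ha (mem_sdiff.1 (Q.le h (mem_insert_self a t))).1

end Finpartition

theorem Nat.card_finpartition_insert {α : Type*} [DecidableEq α] {a : α} {s : Finset α}
    (ha : a ∉ s) :
    Nat.card (Finpartition (insert a s)) =
      ∑ t ∈ s.powerset, Nat.card (Finpartition (s \ t)) := by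
  rw [Nat.card_eq_finsum_card_fiber fun P : Finpartition (insert a s) => (P.part a).erase a,
    finsum_eq_sum_of_support_subset _ (s := s.powerset) fun t ht => ?_]
  · exact sum_congr rfl fun t ht =>
      Nat.card_congr (Finpartition.insertEquiv ha (mem_powerset.1 ht))
  · obtain ⟨⟨P, rfl⟩⟩ := (Nat.card_ne_zero.1 ht).1
    exact mem_powerset.2 (subset_insert_iff.1 (P.part_subset a))

theorem Nat.card_finpartition {α : Type*} [DecidableEq α] (s : Finset α) :
    Nat.card (Finpartition s) = (#s).bell := by
  induction s using Finset.strongInduction with | H s ih => ?_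
  rcases s.eq_empty_or_nonempty with rfl | ⟨a, ha⟩
  · rw [card_empty, Nat.bell_zero]
    exact Nat.card_unique (α := Finpartition (⊥ : Finset α))
  rw [← insert_erase ha, Nat.card_finpartition_insert (notMem_erase a s),
    card_insert_of_notMem (notMem_erase a s), Nat.bell_succ, ← Nat.range_succ_eq_Iic]
  calc ∑ t ∈ (s.erase a).powerset, Nat.card (Finpartition (s.erase a \ t))
      = ∑ t ∈ (s.erase a).powerset, (#(s.erase a) - #t).bell := sum_congr rfl fun t ht => by
        rw [ih _ (sdiff_subset.trans_ssubset (erase_ssubset ha)),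
          card_sdiff_of_subset (mem_powerset.1 ht)]
    _ = _ := by
      rw [sum_powerset_apply_card (fun m => (#(s.erase a) - m).bell)]
      simp only [smul_eq_mul]

section AdjacencyOperator

open Finsupp

variable {α : Type*}

noncomputable def adjOp (s : α → Finset α) : Module.End ℕ (α →₀ ℕ) :=
  linearCombination ℕ fun a => ∑ b ∈ s a, single b 1

lemma adjOp_single (s : α → Finset α) (a : α) :
    adjOp s (single a 1) = ∑ b ∈ s a, single b 1 := by
  rw [adjOp, linearCombination_single, one_smul]

lemma adjOp_single_apply [DecidableEq α] (s : α → Finset α) (a b : α) :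
    adjOp s (single a 1) b = if b ∈ s a then 1 else 0 := by
  simp [adjOp_single, finsetSum_apply, single_apply]

lemma adjOp_adjOp_single_apply [DecidableEq α] (s t : α → Finset α) (a c : α) :
    adjOp t (adjOp s (single a 1)) c = #{b ∈ s a | c ∈ t b} := by
  rw [adjOp_single, map_sum, finsetSum_apply, card_filter]
  simp only [adjOp_single_apply]

lemma adjOp_insert_self [DecidableEq α] (s : α → Finset α) (h : ∀ a, a ∉ s a) :
    adjOp (fun a => insert a (s a)) = 1 + adjOp s := by
  ext a : 2
  simp [adjOp_single, sum_insert (h a)]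

lemma apply_eq_finsum_mul_single_apply (T : Module.End ℕ (α →₀ ℕ)) (u : α →₀ ℕ)
    (b : α) :
    T u b = ∑ᶠ a, u a * T (single a 1) b := by
  rw [finsum_eq_sum_of_support_subset _ (s := u.support) fun a ha => ?_]
  · conv_lhs => rw [← u.sum_single]
    rw [map_finsuppSum, Finsupp.sum_apply]
    refine Finset.sum_congr rfl fun a _ => ?_
    dsimp only
    conv_lhs => rw [← smul_single_one]
    rw [map_smul, Finsupp.smul_apply, smul_eq_mul]
  · exact mem_support_iff.2 (left_ne_zero_of_mul ha)

end AdjacencyOperator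

theorem map_mul_pow_succ_eq_sum_choose_smul {A M : Type*} [Semiring A] [AddCommMonoid M]
    (φ : A →+ M) {x y : A} (hyx : y * x = 1 + x * y) (hx : ∀ a, φ (x * a) = φ a)
    (hy : ∀ a, φ (a * y) = φ a) (n : ℕ) :
    φ ((x * y) ^ (n + 1)) = ∑ k ∈ range (n + 1), n.choose k • φ ((x * y) ^ (n - k)) := by
  rw [pow_succ', mul_assoc, ← mul_pow_mul, hx, hy, hyx, (Commute.one_left _).add_pow, map_sum]
  refine sum_congr rfl fun k _ => ?_
  rw [one_pow, one_mul, ← nsmul_eq_mul', map_nsmul]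

namespace YoungDiagram

instance : DecidableEq YoungDiagram :=
  fun _ _ => decidable_of_iff _ YoungDiagram.ext_iff.symm

variable {μ ν ρ σ : YoungDiagram} {i : ℕ}

lemma eq_of_le_of_card_le (h : μ ≤ ν) (h' : ν.card ≤ μ.card) : μ = ν :=
  YoungDiagram.ext (Finset.eq_of_subset_of_card_le (cells_subset_iff.2 h) h')

lemma card_sup_add_card_inf (μ ν : YoungDiagram) :
    (μ ⊔ ν).card + (μ ⊓ ν).card = μ.card + ν.card := by
  simp only [YoungDiagram.card, cells_sup, cells_inf, card_union_add_card_inter]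

lemma addOne_iff_exists_insert :
    AddOne μ ν ↔ ∃ c ∉ μ.cells, insert c μ.cells = ν.cells := by
  rw [exists_eq_insert_iff, AddOne, cells_subset_iff, eq_comm]

lemma fst_lt_card {c : ℕ × ℕ} (h : c ∈ μ) : c.1 < μ.card :=
  calc c.1 < μ.colLen c.2 := mem_iff_lt_colLen.1 h
    _ = #(μ.col c.2) := μ.colLen_eq_card
    _ ≤ μ.card := card_filter_le _ _

lemma snd_lt_card {c : ℕ × ℕ} (h : c ∈ μ) : c.2 < μ.card :=
  calc c.2 < μ.rowLen c.1 := mem_iff_lt_rowLen.1 h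
    _ = #(μ.row c.1) := μ.rowLen_eq_card
    _ ≤ μ.card := card_filter_le _ _

lemma finite_setOf_card_le (N : ℕ) : {μ : YoungDiagram | μ.card ≤ N}.Finite := by
  refine ((range N ×ˢ range N).powerset.finite_toSet.preimage
    (fun μ _ ν _ h => YoungDiagram.ext h)).subset fun μ (hμ : μ.card ≤ N) => ?_
  simp only [Set.mem_preimage, coe_powerset, Set.mem_powerset_iff, coe_subset]
  intro c hc
  have := fst_lt_card hc
  have := snd_lt_card hc
  simp only [mem_product, mem_range]
  omega

def addableRows (μ : YoungDiagram) : Finset ℕ :=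
  (range (μ.colLen 0 + 1)).filter fun i => i = 0 ∨ μ.rowLen i < μ.rowLen (i - 1)

def removableRows (μ : YoungDiagram) : Finset ℕ :=
  (range (μ.colLen 0)).filter fun i => μ.rowLen (i + 1) < μ.rowLen i

lemma rowLen_pos_iff : 0 < μ.rowLen i ↔ i < μ.colLen 0 := by
  rw [← mem_iff_lt_rowLen, ← mem_iff_lt_colLen]

lemma mem_addableRows : i ∈ addableRows μ ↔ i = 0 ∨ μ.rowLen i < μ.rowLen (i - 1) := by
  refine mem_filter.trans ⟨And.right, fun h => ⟨?_, h⟩⟩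
  have := @rowLen_pos_iff μ (i - 1)
  rw [mem_range]
  omega

lemma mem_removableRows : i ∈ removableRows μ ↔ μ.rowLen (i + 1) < μ.rowLen i := by
  refine mem_filter.trans ⟨And.right, fun h => ⟨?_, h⟩⟩
  have := @rowLen_pos_iff μ i
  rw [mem_range]
  omega

lemma addableRows_eq_insert_image :
    addableRows μ = insert 0 ((removableRows μ).image (· + 1)) := by
  ext (_ | i) <;> simp [mem_addableRows, mem_removableRows]

lemma card_addableRows : #(addableRows μ) = #(removableRows μ) + 1 := by
  rw [addableRows_eq_insert_image, card_insert_of_notMem (by simp),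
    card_image_of_injective _ (add_left_injective 1)]

lemma corner_notMem (μ : YoungDiagram) (i : ℕ) : (i, μ.rowLen i) ∉ μ := by
  simp [mem_iff_lt_rowLen]

lemma isLowerSet_insert_corner (h : i ∈ addableRows μ) :
    IsLowerSet ((insert (i, μ.rowLen i) μ.cells : Finset (ℕ × ℕ)) : Set (ℕ × ℕ)) := by
  rw [mem_addableRows] at h
  rintro ⟨a1, a2⟩ ⟨b1, b2⟩ ⟨hb1, hb2⟩ ha
  dsimp only at hb1 hb2
  simp only [coe_insert, Set.mem_insert_iff, Prod.mk.injEq, mem_coe, mem_cells,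
    mem_iff_lt_rowLen] at ha ⊢
  rcases ha with ⟨rfl, rfl⟩ | ha
  · rcases hb1.eq_or_lt with rfl | hlt
    · omega
    · have := μ.rowLen_anti b1 (a1 - 1) (by omega)
      omega
  · have := μ.rowLen_anti b1 a1 hb1
    omega

def addCell (μ : YoungDiagram) (i : ℕ) : YoungDiagram :=
  if h : i ∈ addableRows μ then ⟨_, isLowerSet_insert_corner h⟩ else μ

lemma cells_addCell (h : i ∈ addableRows μ) :
    (addCell μ i).cells = insert (i, μ.rowLen i) μ.cells := by
  rw [addCell, dif_pos h]

lemma isLowerSet_erase_corner (h : i ∈ removableRows μ) :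
    IsLowerSet
      ((μ.cells.erase (i, μ.rowLen i - 1) : Finset (ℕ × ℕ)) : Set (ℕ × ℕ)) := by
  rw [mem_removableRows] at h
  rintro ⟨a1, a2⟩ ⟨b1, b2⟩ ⟨hb1, hb2⟩ ha
  dsimp only at hb1 hb2
  simp only [coe_erase, Set.mem_sdiff, Set.mem_singleton_iff, Prod.mk.injEq, mem_coe,
    mem_cells] at ha ⊢
  obtain ⟨ha, hne⟩ := ha
  refine ⟨μ.up_left_mem hb1 hb2 ha, ?_⟩
  rintro ⟨rfl, rfl⟩
  rw [mem_iff_lt_rowLen] at ha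
  rcases hb1.eq_or_lt with rfl | hlt
  · omega
  · have := μ.rowLen_anti (b1 + 1) a1 hlt
    omega

def removeCell (μ : YoungDiagram) (i : ℕ) : YoungDiagram :=
  if h : i ∈ removableRows μ then ⟨_, isLowerSet_erase_corner h⟩ else μ

lemma cells_removeCell (h : i ∈ removableRows μ) :
    (removeCell μ i).cells = μ.cells.erase (i, μ.rowLen i - 1) := by
  rw [removeCell, dif_pos h]

lemma corner_mem (h : i ∈ removableRows μ) : (i, μ.rowLen i - 1) ∈ μ := by
  rw [mem_removableRows] at h
  rw [mem_iff_lt_rowLen]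
  omega

lemma addOne_addCell (h : i ∈ addableRows μ) : AddOne μ (addCell μ i) :=
  addOne_iff_exists_insert.2 ⟨_, corner_notMem μ i, (cells_addCell h).symm⟩

lemma addOne_removeCell (h : i ∈ removableRows μ) : AddOne (removeCell μ i) μ := by
  refine addOne_iff_exists_insert.2 ⟨(i, μ.rowLen i - 1), ?_, ?_⟩
  · rw [cells_removeCell h]
    exact notMem_erase _ _
  · rw [cells_removeCell h, insert_erase (corner_mem h)]

lemma addOne_iff_exists_addableRows :
    AddOne μ ν ↔ ∃ i ∈ addableRows μ, addCell μ i = ν := by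
  refine ⟨fun h => ?_, fun ⟨i, hi, hν⟩ => hν ▸ addOne_addCell hi⟩
  obtain ⟨⟨i, j⟩, hc, hν⟩ := addOne_iff_exists_insert.1 h
  have mem_ν : ∀ d, d ∈ ν ↔ d = (i, j) ∨ d ∈ μ := fun d => by
    rw [← mem_cells, ← hν, mem_insert, mem_cells]
  have hj : μ.rowLen i = j := by
    have hle : μ.rowLen i ≤ j := not_lt.1 (mt mem_iff_lt_rowLen.2 hc)
    have := (mem_ν _).1 (ν.up_left_mem le_rfl hle ((mem_ν _).2 (Or.inl rfl)))
    simpa [corner_notMem] using this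
  subst hj
  have hi : i ∈ addableRows μ := by
    rw [mem_addableRows, or_iff_not_imp_left]
    intro hi
    have := (mem_ν _).1 (ν.up_left_mem (Nat.sub_le i 1) le_rfl ((mem_ν _).2 (Or.inl rfl)))
    simp only [Prod.mk.injEq, and_true, mem_iff_lt_rowLen] at this
    omega
  exact ⟨i, hi, YoungDiagram.ext (by rw [cells_addCell hi, hν])⟩

lemma addOne_iff_exists_removableRows :
    AddOne σ μ ↔ ∃ i ∈ removableRows μ, removeCell μ i = σ := by
  refine ⟨fun h => ?_, fun ⟨i, hi, hσ⟩ => hσ ▸ addOne_removeCell hi⟩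
  obtain ⟨⟨i, j⟩, hc, hμ⟩ := addOne_iff_exists_insert.1 h
  have mem_μ : ∀ d, d ∈ μ ↔ d = (i, j) ∨ d ∈ σ := fun d => by
    rw [← mem_cells, ← hμ, mem_insert, mem_cells]
  have hj_lt : j < μ.rowLen i := mem_iff_lt_rowLen.1 ((mem_μ _).2 (Or.inl rfl))
  have hj : j = μ.rowLen i - 1 := by
    by_contra hne
    have := (mem_μ (i, j + 1)).1 (mem_iff_lt_rowLen.2 (by omega))
    simp only [Prod.mk.injEq, add_eq_left, one_ne_zero, and_false, false_or] at this
    exact hc (σ.up_left_mem le_rfl (Nat.le_succ j) this)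
  have hi : i ∈ removableRows μ := by
    rw [mem_removableRows]
    by_contra! hle
    have := (mem_μ (i + 1, j)).1 (mem_iff_lt_rowLen.2 (by omega))
    simp only [Prod.mk.injEq, add_eq_left, one_ne_zero, false_and, false_or] at this
    exact hc (σ.up_left_mem (Nat.le_succ i) le_rfl this)
  refine ⟨i, hi, YoungDiagram.ext ?_⟩
  rw [cells_removeCell hi, ← hμ, ← hj, erase_insert hc]

def covers (μ : YoungDiagram) : Finset YoungDiagram := (addableRows μ).image (addCell μ)

def lowers (μ : YoungDiagram) : Finset YoungDiagram := (removableRows μ).image (removeCell μ)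

lemma mem_covers : ν ∈ covers μ ↔ AddOne μ ν := by
  rw [covers, mem_image, addOne_iff_exists_addableRows]

lemma mem_lowers : σ ∈ lowers μ ↔ AddOne σ μ := by
  rw [lowers, mem_image, addOne_iff_exists_removableRows]

lemma injOn_addCell : Set.InjOn (addCell μ) (addableRows μ) := fun a ha b hb hab => by
  have h := mem_insert_self (a, μ.rowLen a) μ.cells
  rw [← cells_addCell ha, hab, cells_addCell hb, mem_insert, mem_cells] at h
  exact (Prod.mk.inj (h.resolve_right (corner_notMem μ a))).1

lemma injOn_removeCell : Set.InjOn (removeCell μ) (removableRows μ) := fun a ha b hb hab => by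
  have h := notMem_erase (a, μ.rowLen a - 1) μ.cells
  rw [← cells_removeCell ha, hab, cells_removeCell hb, mem_erase, not_and'] at h
  by_contra hne
  exact h (corner_mem ha) (by simp [hne])

lemma card_covers : #(covers μ) = #(lowers μ) + 1 := by
  rw [covers, lowers, card_image_of_injOn injOn_addCell, card_image_of_injOn injOn_removeCell,
    card_addableRows]

lemma eq_sup_of_addOne (hne : μ ≠ ν) (hμ : AddOne μ ρ) (hν : AddOne ν ρ) :
    ρ = μ ⊔ ν := by
  have := hμ.2
  have := hν.2
  have hlt : μ.card < (μ ⊔ ν).card := by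
    by_contra! h
    have hμν : μ ⊔ ν = μ := (eq_of_le_of_card_le le_sup_left h).symm
    exact hne (eq_of_le_of_card_le (hμν ▸ le_sup_right) (by omega)).symm
  exact (eq_of_le_of_card_le (sup_le hμ.1 hν.1) (by omega)).symm

lemma eq_inf_of_addOne (hne : μ ≠ ν) (hμ : AddOne σ μ) (hν : AddOne σ ν) :
    σ = μ ⊓ ν := by
  have := hμ.2
  have := hν.2
  have hlt : (μ ⊓ ν).card < μ.card := by
    by_contra! h
    have hμν : μ ⊓ ν = μ := eq_of_le_of_card_le inf_le_left h
    exact hne (eq_of_le_of_card_le (hμν ▸ inf_le_right) (by omega))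
  exact eq_of_le_of_card_le (le_inf hμ.1 hν.1) (by omega)

lemma addOne_sup_iff_addOne_inf :
    AddOne μ (μ ⊔ ν) ∧ AddOne ν (μ ⊔ ν) ↔ AddOne (μ ⊓ ν) μ ∧ AddOne (μ ⊓ ν) ν := by
  have := card_sup_add_card_inf μ ν
  simp only [AddOne, le_sup_left, le_sup_right, inf_le_left, inf_le_right, true_and]
  constructor <;> rintro ⟨h1, h2⟩ <;> constructor <;> omega

lemma card_covers_inter_covers_of_ne (hne : μ ≠ ν) :
    #(covers μ ∩ covers ν) = #(lowers μ ∩ lowers ν) := by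
  classical
  have hc : covers μ ∩ covers ν =
      {ρ ∈ ({μ ⊔ ν} : Finset YoungDiagram) | AddOne μ (μ ⊔ ν) ∧ AddOne ν (μ ⊔ ν)} := by
    ext ρ
    simp only [mem_inter, mem_covers, mem_filter, mem_singleton]
    refine ⟨fun ⟨h1, h2⟩ => ?_, fun ⟨hρ, h⟩ => hρ ▸ h⟩
    obtain rfl := eq_sup_of_addOne hne h1 h2
    exact ⟨rfl, h1, h2⟩
  have hl : lowers μ ∩ lowers ν =
      {σ ∈ ({μ ⊓ ν} : Finset YoungDiagram) | AddOne (μ ⊓ ν) μ ∧ AddOne (μ ⊓ ν) ν} := by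
    ext σ
    simp only [mem_inter, mem_lowers, mem_filter, mem_singleton]
    refine ⟨fun ⟨h1, h2⟩ => ?_, fun ⟨hσ, h⟩ => hσ ▸ h⟩
    obtain rfl := eq_inf_of_addOne hne h1 h2
    exact ⟨rfl, h1, h2⟩
  simp only [hc, hl, addOne_sup_iff_addOne_inf, filter_singleton]
  split_ifs <;> rfl

lemma card_covers_inter_covers (μ ν : YoungDiagram) :
    #(covers μ ∩ covers ν) = #(lowers μ ∩ lowers ν) + if μ = ν then 1 else 0 := by
  split_ifs with h
  · rw [h, inter_self, inter_self, card_covers]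
  · exact card_covers_inter_covers_of_ne h

open Finsupp

noncomputable def upOp : Module.End ℕ (YoungDiagram →₀ ℕ) := adjOp covers

noncomputable def downOp : Module.End ℕ (YoungDiagram →₀ ℕ) := adjOp lowers

lemma downOp_mul_upOp : downOp * upOp = upOp * downOp + 1 := by
  ext μ τ
  simp only [LinearMap.coe_comp, Function.comp_apply, lsingle_apply, Module.End.mul_apply,
    LinearMap.add_apply, Module.End.one_apply, Finsupp.add_apply, upOp, downOp,
    adjOp_adjOp_single_apply]
  have hc : {ν ∈ covers μ | τ ∈ lowers ν} = covers μ ∩ covers τ := by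
    ext ν
    simp only [mem_filter, mem_inter, mem_covers, mem_lowers]
  have hl : {σ ∈ lowers μ | τ ∈ covers σ} = lowers μ ∩ lowers τ := by
    ext σ
    simp only [mem_filter, mem_inter, mem_covers, mem_lowers]
  rw [hc, hl, card_covers_inter_covers, single_apply]

lemma not_addOne_bot : ¬ AddOne μ ⊥ := by
  rintro ⟨-, h⟩
  simp [YoungDiagram.card] at h

lemma lowers_bot : lowers ⊥ = ∅ :=
  eq_empty_of_forall_notMem fun _ h => not_addOne_bot (mem_lowers.1 h)

lemma upOp_apply_bot (u : YoungDiagram →₀ ℕ) : upOp u ⊥ = 0 := by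
  rw [apply_eq_finsum_mul_single_apply, upOp]
  simp only [adjOp_single_apply, mem_covers, not_addOne_bot, if_false, mul_zero, finsum_zero]

lemma downOp_single_bot : downOp (single ⊥ 1) = 0 := by
  rw [downOp, adjOp_single, lowers_bot, sum_empty]

noncomputable def walkOp : Module.End ℕ (YoungDiagram →₀ ℕ) := (1 + upOp) * (1 + downOp)

lemma walkOp_pow_single_bot_apply_bot (n : ℕ) : (walkOp ^ n) (single ⊥ 1) ⊥ = n.bell := by
  induction n using Nat.strong_induction_on with | _ n ih => ?_
  rcases n with _ | n
  · simp
  · let φ : Module.End ℕ (YoungDiagram →₀ ℕ) →+ ℕ :=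
      { toFun := fun T => T (single ⊥ 1) ⊥, map_zero' := rfl, map_add' := fun _ _ => rfl }
    have hyx : (1 + downOp) * (1 + upOp) = 1 + (1 + upOp) * (1 + downOp) := by
      simp only [add_mul, mul_add, one_mul, mul_one, downOp_mul_upOp]
      abel
    have hx : ∀ T, φ ((1 + upOp) * T) = φ T := fun T =>
      show ((1 + upOp) * T) (single ⊥ 1) ⊥ = T (single ⊥ 1) ⊥ by simp [upOp_apply_bot]
    have hy : ∀ T, φ (T * (1 + downOp)) = φ T := fun T =>
      show (T * (1 + downOp)) (single ⊥ 1) ⊥ = T (single ⊥ 1) ⊥ by simp [downOp_single_bot]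
    change φ (walkOp ^ (n + 1)) = _
    rw [walkOp, map_mul_pow_succ_eq_sum_choose_smul φ hyx hx hy, Nat.bell_succ,
      ← Nat.range_succ_eq_Iic]
    refine sum_congr rfl fun k hk => ?_
    rw [smul_eq_mul, ← ih (n - k) (by omega)]
    rfl

end YoungDiagram

def VacStep (k : ℕ) (μ ν : YoungDiagram) : Prop :=
  if Even k then ν = μ ∨ AddOne ν μ else ν = μ ∨ AddOne μ ν

def IsVacWalk (n : ℕ) (μ ν : YoungDiagram) (V : ℕ → YoungDiagram) : Prop :=
  V 0 = μ ∧ (∀ k, 2 * n ≤ k → V k = ν) ∧ ∀ k < 2 * n, VacStep k (V k) (V (k + 1))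

abbrev VacWalk (n : ℕ) (μ ν : YoungDiagram) : Type :=
  {V : ℕ → YoungDiagram // IsVacWalk n μ ν V}

section VacWalk

variable {n m k l : ℕ} {μ ν ρ : YoungDiagram} {V W : ℕ → YoungDiagram}

lemma vacStep_congr (h : k % 2 = l % 2) : VacStep k μ ν ↔ VacStep l μ ν := by
  simp only [VacStep, Nat.even_iff, h]

lemma vacStep_succ_iff : VacStep (k + 1) ν μ ↔ VacStep k μ ν := by
  simp only [VacStep, Nat.even_add_one]
  by_cases hk : Even k <;> simp [hk, eq_comm]

lemma VacStep.card_le (h : VacStep k μ ν) : ν.card ≤ μ.card + k % 2 := by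
  simp only [VacStep, Nat.even_iff] at h
  split_ifs at h with hk <;> rcases h with rfl | ⟨-, h⟩ <;> omega

lemma IsVacWalk.card_le (h : IsVacWalk n μ ν V) (k : ℕ) : (V k).card ≤ μ.card + n := by
  have key : ∀ k ≤ 2 * n, (V k).card ≤ μ.card + k / 2 := by
    intro k
    induction k with
    | zero => simp [h.1]
    | succ k ih =>
      intro hk
      have := (h.2.2 k (by omega)).card_le
      have := ih (by omega)
      omega
  rcases le_or_gt k (2 * n) with hk | hk
  · have := key k hk
    omega
  · rw [h.2.1 k hk.le, ← h.2.1 (2 * n) le_rfl]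
    have := key (2 * n) le_rfl
    omega

instance (n : ℕ) (μ ν : YoungDiagram) : Finite (VacWalk n μ ν) := by
  have := (YoungDiagram.finite_setOf_card_le (μ.card + n)).to_subtype
  refine Finite.of_injective (fun W (k : Fin (2 * n + 1)) =>
    (⟨W.1 k, W.2.card_le k⟩ : {ρ : YoungDiagram | ρ.card ≤ μ.card + n})) fun W W' hW => ?_
  ext k : 2
  rcases le_or_gt k (2 * n) with hk | hk
  · exact congrArg Subtype.val (congrFun hW ⟨k, by omega⟩)
  · rw [W.2.2.1 k hk.le, W'.2.2.1 k hk.le]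

lemma isVacTab_iff {lam : YoungDiagram} : IsVacTab n lam V ↔ IsVacWalk n ⊥ lam V := by
  have hsteps : (∀ k < 2 * n, VacStep k (V k) (V (k + 1))) ↔
      (∀ i < n, V (2 * i + 1) = V (2 * i) ∨ AddOne (V (2 * i + 1)) (V (2 * i))) ∧
      (∀ i < n, V (2 * i + 2) = V (2 * i + 1) ∨ AddOne (V (2 * i + 1)) (V (2 * i + 2))) := by
    constructor
    · intro h
      refine ⟨fun i hi => ?_, fun i hi => ?_⟩
      · simpa [VacStep] using h (2 * i) (by omega)
      · simpa [VacStep, Nat.even_add_one] using h (2 * i + 1) (by omega)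
    · rintro ⟨hdown, hup⟩ k hk
      obtain ⟨i, rfl | rfl⟩ := Nat.even_or_odd' k
      · simpa [VacStep] using hdown i (by omega)
      · simpa [VacStep, Nat.even_add_one] using hup i (by omega)
  rw [IsVacTab, IsVacWalk, hsteps]
  exact ⟨fun ⟨h0, _, hlam, hs⟩ => ⟨h0, hlam, hs⟩,
    fun ⟨h0, hlam, hs⟩ => ⟨h0, hlam _ le_rfl, hlam, hs⟩⟩

lemma IsVacWalk.take (h : IsVacWalk (n + m) μ ρ V) :
    IsVacWalk n μ (V (2 * n)) fun k => V (min k (2 * n)) := by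
  refine ⟨by simpa using h.1, fun k hk => by simp only [min_eq_right hk], fun k hk => ?_⟩
  simp only [min_eq_left hk.le, min_eq_left (show k + 1 ≤ 2 * n from hk)]
  exact h.2.2 k (by omega)

lemma IsVacWalk.drop (h : IsVacWalk (n + m) μ ρ V) :
    IsVacWalk m (V (2 * n)) ρ fun k => V (2 * n + k) := by
  refine ⟨rfl, fun k hk => h.2.1 _ (by omega), fun k hk => ?_⟩
  exact (vacStep_congr (by omega)).1 (h.2.2 (2 * n + k) (by omega))

lemma IsVacWalk.append (hV : IsVacWalk n μ ν V) (hW : IsVacWalk m ν ρ W) :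
    IsVacWalk (n + m) μ ρ fun k => if k ≤ 2 * n then V k else W (k - 2 * n) := by
  have hge : ∀ k, 2 * n ≤ k →
      (if k ≤ 2 * n then V k else W (k - 2 * n)) = W (k - 2 * n) := by
    intro k hk
    split_ifs with h
    · rw [hV.2.1 k hk, Nat.sub_eq_zero_of_le h, hW.1]
    · rfl
  refine ⟨by simp [hV.1], fun k hk => ?_, fun k hk => ?_⟩ <;> dsimp only
  · rw [hge k (by omega)]
    exact hW.2.1 _ (by omega)
  rcases lt_or_ge k (2 * n) with hkn | hkn
  · rw [if_pos hkn.le, if_pos (show k + 1 ≤ 2 * n from hkn)]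
    exact hV.2.2 k hkn
  · rw [hge k hkn, hge (k + 1) (by omega), show k + 1 - 2 * n = k - 2 * n + 1 by omega]
    exact (vacStep_congr (by omega)).1 (hW.2.2 (k - 2 * n) (by omega))

def vacWalkSplitEquiv (n m : ℕ) (μ ν ρ : YoungDiagram) :
    {W : VacWalk (n + m) μ ρ // W.1 (2 * n) = ν} ≃ VacWalk n μ ν × VacWalk m ν ρ where
  toFun W := (⟨fun k => W.1.1 (min k (2 * n)), by have h := W.1.2.take; rwa [W.2] at h⟩,
    ⟨fun k => W.1.1 (2 * n + k), by have h := W.1.2.drop; rwa [W.2] at h⟩)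
  invFun P := ⟨⟨_, P.1.2.append P.2.2⟩, by simp [P.1.2.2.1 _ le_rfl]⟩
  left_inv W := by
    ext k : 3
    dsimp only
    split_ifs with hk
    · rw [min_eq_left hk]
    · rw [Nat.add_sub_of_le (by omega)]
  right_inv P := by
    ext k : 3
    · dsimp only
      rw [if_pos (min_le_right _ _)]
      rcases le_or_gt k (2 * n) with hk | hk
      · rw [min_eq_left hk]
      · rw [min_eq_right hk.le, P.1.2.2.1 _ le_rfl, P.1.2.2.1 k hk.le]
    · dsimp only
      split_ifs with hk
      · rw [show k = 0 by omega, P.2.2.1, Nat.add_zero, P.1.2.2.1 _ le_rfl]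
      · rw [Nat.add_sub_cancel_left]

lemma card_vacWalk_add (n m : ℕ) (μ ρ : YoungDiagram) :
    Nat.card (VacWalk (n + m) μ ρ) =
      ∑ᶠ ν, Nat.card (VacWalk n μ ν) * Nat.card (VacWalk m ν ρ) := by
  rw [Nat.card_eq_finsum_card_fiber fun W : VacWalk (n + m) μ ρ => W.1 (2 * n)]
  exact finsum_congr fun ν => by
    rw [Nat.card_congr (vacWalkSplitEquiv n m μ ν ρ), Nat.card_prod]

lemma IsVacWalk.reverse (h : IsVacWalk n μ ν V) : IsVacWalk n ν μ fun k => V (2 * n - k) := by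
  refine ⟨by simpa using h.2.1 _ le_rfl, fun k hk => by simp only [Nat.sub_eq_zero_of_le hk, h.1],
    fun k hk => ?_⟩
  have := vacStep_succ_iff.2 (h.2.2 (2 * n - (k + 1)) (by omega))
  rw [show 2 * n - (k + 1) + 1 = 2 * n - k by omega] at this
  exact (vacStep_congr (by omega)).1 this

lemma IsVacWalk.reverse_reverse (h : IsVacWalk n μ ν V) :
    (fun k => V (2 * n - (2 * n - k))) = V := by
  ext1 k
  rcases le_or_gt k (2 * n) with hk | hk
  · rw [Nat.sub_sub_self hk]
  · rw [Nat.sub_eq_zero_of_le hk.le, Nat.sub_zero, h.2.1 k hk.le, h.2.1 _ le_rfl]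

def vacWalkReverseEquiv (n : ℕ) (μ ν : YoungDiagram) : VacWalk n μ ν ≃ VacWalk n ν μ where
  toFun W := ⟨_, W.2.reverse⟩
  invFun W := ⟨_, W.2.reverse⟩
  left_inv W := Subtype.ext W.2.reverse_reverse
  right_inv W := Subtype.ext W.2.reverse_reverse

lemma card_vacWalk_comm (n : ℕ) (μ ν : YoungDiagram) :
    Nat.card (VacWalk n μ ν) = Nat.card (VacWalk n ν μ) :=
  Nat.card_congr (vacWalkReverseEquiv n μ ν)

end VacWalk

namespace YoungDiagram

open Finsupp

variable {μ ν ρ : YoungDiagram}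

lemma not_addOne_self : ¬ AddOne μ μ := fun h => by
  have := h.2
  omega

lemma vacStep_zero_iff : VacStep 0 μ ρ ↔ ρ ∈ insert μ (lowers μ) := by
  simp [VacStep, mem_lowers]

lemma vacStep_one_iff : VacStep 1 ρ ν ↔ ν ∈ insert ρ (covers ρ) := by
  simp [VacStep, mem_covers]

def vacWalkOneEquiv (μ ν : YoungDiagram) :
    VacWalk 1 μ ν ≃ {ρ // VacStep 0 μ ρ ∧ VacStep 1 ρ ν} where
  toFun W := ⟨W.1 1, by have h := W.2.2.2 0 (by omega); rwa [W.2.1] at h,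
    by have h := W.2.2.2 1 (by omega); rwa [W.2.2.1 2 le_rfl] at h⟩
  invFun ρ := ⟨fun k => if k = 0 then μ else if k = 1 then ρ.1 else ν, rfl,
    fun k hk => by simp [show k ≠ 0 by omega, show k ≠ 1 by omega],
    fun k hk => by interval_cases k <;> simp [ρ.2.1, ρ.2.2]⟩
  left_inv W := by
    ext (_ | _ | k) : 2
    · exact W.2.1.symm
    · rfl
    · exact (W.2.2.1 _ (by omega)).symm
  right_inv _ := rfl

lemma walkOp_eq_adjOp_mul_adjOp :
    walkOp = adjOp (fun μ => insert μ (covers μ)) * adjOp (fun μ => insert μ (lowers μ)) := by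
  rw [walkOp, upOp, downOp, adjOp_insert_self _ fun _ h => not_addOne_self (mem_covers.1 h),
    adjOp_insert_self _ fun _ h => not_addOne_self (mem_lowers.1 h)]

lemma card_vacWalk_one (μ ν : YoungDiagram) :
    Nat.card (VacWalk 1 μ ν) = walkOp (single μ 1) ν := by
  rw [walkOp_eq_adjOp_mul_adjOp, Module.End.mul_apply, adjOp_adjOp_single_apply,
    ← Nat.card_eq_finsetCard, Nat.card_congr (vacWalkOneEquiv μ ν)]
  exact Nat.card_congr (Equiv.subtypeEquivRight fun ρ => by
    rw [vacStep_zero_iff, vacStep_one_iff, mem_filter])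

lemma card_vacWalk_zero (μ ν : YoungDiagram) : Nat.card (VacWalk 0 μ ν) = single μ 1 ν := by
  rw [single_apply]
  split_ifs with h
  · subst h
    refine Nat.card_eq_one_iff_exists.2 ⟨⟨fun _ => μ, rfl, fun _ _ => rfl, fun _ hk => ?_⟩,
      fun W => Subtype.ext (funext fun k => W.2.2.1 k (Nat.zero_le _))⟩
    omega
  · exact Nat.card_eq_zero.2 (Or.inl ⟨fun W => h (W.2.1.symm.trans (W.2.2.1 0 le_rfl))⟩)

lemma card_vacWalk (n : ℕ) (μ ν : YoungDiagram) :
    Nat.card (VacWalk n μ ν) = (walkOp ^ n) (single μ 1) ν := by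
  induction n generalizing ν with
  | zero => rw [card_vacWalk_zero, pow_zero, Module.End.one_apply]
  | succ n ih =>
    rw [card_vacWalk_add, pow_succ', Module.End.mul_apply, apply_eq_finsum_mul_single_apply walkOp]
    exact finsum_congr fun ρ => by rw [ih, card_vacWalk_one]

end YoungDiagram

lemma g_eq_card_vacWalk (lam : YoungDiagram) (n : ℕ) : g lam n = Nat.card (VacWalk n ⊥ lam) :=
  Nat.card_congr (Equiv.subtypeEquivRight fun _ => isVacTab_iff)

/-- `∑_λ g_λ(n) g_λ(m) = B(m+n)`. -/
theorem stmt7 (m n : ℕ) :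
    ∑ᶠ lam : YoungDiagram, g lam n * g lam m =
    Nat.card (Finpartition (Finset.Icc 1 (m + n))) := by
  calc ∑ᶠ lam, g lam n * g lam m
      = ∑ᶠ lam, Nat.card (VacWalk n ⊥ lam) * Nat.card (VacWalk m lam ⊥) := by
        simp_rw [g_eq_card_vacWalk, card_vacWalk_comm m ⊥]
    _ = Nat.card (VacWalk (n + m) ⊥ ⊥) := (card_vacWalk_add n m ⊥ ⊥).symm
    _ = (n + m).bell := by
        rw [YoungDiagram.card_vacWalk, YoungDiagram.walkOp_pow_single_bot_apply_bot]
    _ = Nat.card (Finpartition (Finset.Icc 1 (m + n))) := by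
        rw [Nat.card_finpartition, Nat.card_Icc, add_tsub_cancel_right, add_comm]
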